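/- arXiv:2504.06139 — 2 statements merged into one kernel-verified Lean document; each statement's English description precedes it below -/
import Mathlib

section
/- In a world with perfect PR-boxes, every Boolean function f : {0,1}^n × {0,1}^n → {0,1} can be distributively computed: there exist local strategies using PR-box correlations such that Alice and Bob output bits a, b with a⊕b = f(x,y). -/
/-!
Index the boxes by Alice's possible inputs `z`. Alice feeds `1` into box `x` only, Bob feeds
`f z y` into box `z`, so the outputs of box `z` differ exactly when `z = x` and `f x y = 1`.
Each party outputs the XOR of all its box outputs; the XOR of the two answers is then the XOR
of all box correlations, which is `f x y`. Calculations take place in the Boolean ring `Bool`,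
where `+` is `xor` and `*` is `&&`.
-/

open Finset

theorem BooleanRing.sum_add_sum_add {ι R : Type*} [BooleanRing R] (s : Finset ι)
    (a w : ι → R) : ∑ i ∈ s, a i + ∑ i ∈ s, (a i + w i) = ∑ i ∈ s, w i := by
  rw [← sum_add_distrib]
  exact sum_congr rfl fun i _ => by rw [← add_assoc, add_self, zero_add]

theorem Bool.sum_decide_eq_mul {ι : Type*} [Fintype ι] [DecidableEq ι] (j : ι) (g : ι → Bool) :
    ∑ i, decide (j = i) * g i = g j := by
  rw [Fintype.sum_eq_single j fun i hi => by simp only [hi.symm]; exact zero_mul _]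
  simp only [decide_true]; exact one_mul _

/-- With perfect PR-boxes, every Boolean function can be distributively
computed: Alice's box inputs `α x` and output `A x a'` depend only on her
input and box outputs, symmetrically for Bob; the PR-boxes guarantee
`b'ᵢ = a'ᵢ ⊕ (uᵢ · vᵢ)` where `a'` is uniformly random, and the final outputs
always satisfy `a ⊕ b = f(x,y)`. -/
theorem distributed_computation_with_pr_boxes (n : ℕ)
    (f : (Fin n → Bool) → (Fin n → Bool) → Bool) :
    ∃ (m : ℕ) (α β : (Fin n → Bool) → Fin m → Bool)
      (A B : (Fin n → Bool) → (Fin m → Bool) → Bool),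
      ∀ (x y : Fin n → Bool) (a' : Fin m → Bool),
        Bool.xor (A x a')
          (B y (fun i => Bool.xor (a' i) (α x i && β y i))) = f x y := by
  let e := Fintype.equivFin (Fin n → Bool)
  refine ⟨_, fun x i => decide (e x = i), fun y i => f (e.symm i) y,
    fun _ a' => ∑ i, a' i, fun _ b' => ∑ i, b' i, fun x y a' => ?_⟩
  change ∑ i, a' i + ∑ i, (a' i + decide (e x = i) * f (e.symm i) y) = f x y
  rw [BooleanRing.sum_add_sum_add, Bool.sum_decide_eq_mul, e.symm_apply_apply]
end

section
/- For the Brunner–Skrzypczyk protocol on two correlated non-local boxes: if P^C_ε = ε P^{PR} + (1−ε) P^C, then CHSH(B²[P^C_ε]) = 3ε − ε² + 2, which is strictly greater than CHSH(P^C_ε) = 2(ε+1) for 0 < ε < 1. -/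
noncomputable def PRbox (a b x y : Bool) : ℝ :=
  if Bool.xor a b = (x && y) then 1/2 else 0

noncomputable def corr (P : Bool → Bool → Bool → Bool → ℝ) (x y : Bool) : ℝ :=
  P false false x y + P true true x y - P false true x y - P true false x y

noncomputable def chshS (P : Bool → Bool → Bool → Bool → ℝ) (x y : Bool) : ℝ :=
  corr P x y + corr P x (!y) + corr P (!x) y - corr P (!x) (!y)

noncomputable def CHSH (P : Bool → Bool → Bool → Bool → ℝ) : ℝ :=
  max (max |chshS P false false| |chshS P false true|)
      (max |chshS P true false| |chshS P true true|)

noncomputable def corrBox (a b x y : Bool) : ℝ :=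
  if Bool.xor a b = false then 1/2 else 0

noncomputable def PC (ε : ℝ) (a b x y : Bool) : ℝ :=
  ε * PRbox a b x y + (1 - ε) * corrBox a b x y

/-- The Brunner–Skrzypczyk protocol on two independent copies of a box. -/
noncomputable def BS (P : Bool → Bool → Bool → Bool → ℝ) (a b x y : Bool) : ℝ :=
  ∑ a₁ : Bool, ∑ b₁ : Bool,
    P a₁ b₁ x y * P (Bool.xor a a₁) (Bool.xor b b₁) (x && a₁) (y && b₁)

/-!
Both `P^C_ε` and its image under the protocol have correlator `1` on every input except
`(1, 1)`, where it is some `c ≤ 1`; such a box has CHSH value `3 - c`. For `P^C_ε`,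
`c = 1 - 2ε`. In the protocol the second box's outputs are only XORed in, so its correlator
depends on the first box's outputs only through the inputs they select; on input `(1, 1)` this
gives `c = (1 - ε)² - ε`, the first box agreeing with probability `1 - ε` and then feeding the
second box `(0, 0)` or `(1, 1)`, disagreeing with probability `ε` and feeding it `(0, 1)` or
`(1, 0)`.
-/

theorem corr_PRbox (x y : Bool) : corr PRbox x y = if x && y then -1 else 1 := by
  cases x <;> cases y <;> norm_num [corr, PRbox]

theorem corr_corrBox (x y : Bool) : corr corrBox x y = 1 := by
  norm_num [corr, corrBox]

theorem corr_PC (ε : ℝ) (x y : Bool) : corr (PC ε) x y = if x && y then 1 - 2 * ε else 1 := by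
  have hmix : corr (PC ε) x y = ε * corr PRbox x y + (1 - ε) * corr corrBox x y := by
    simp only [corr, PC]; ring
  rw [hmix, corr_PRbox, corr_corrBox]
  split_ifs <;> ring

theorem corr_BS (P : Bool → Bool → Bool → Bool → ℝ) (x y : Bool) :
    corr (BS P) x y = ∑ a₁ : Bool, ∑ b₁ : Bool,
      (if Bool.xor a₁ b₁ then -1 else 1) * P a₁ b₁ x y * corr P (x && a₁) (y && b₁) := by
  simp only [corr, BS, Fintype.sum_bool, Bool.bne_true, Bool.not_true, Bool.not_false,
    Bool.and_true, bne_self_eq_false, Bool.and_false, Bool.bne_false, Bool.false_eq_true,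
    ↓reduceIte]
  ring

theorem corr_BS_PC (ε : ℝ) (x y : Bool) :
    corr (BS (PC ε)) x y = if x && y then (1 - ε) ^ 2 - ε else 1 := by
  rw [corr_BS]
  simp only [corr_PC, Fintype.sum_bool]
  cases x <;> cases y <;> norm_num [PC, PRbox, corrBox] <;> ring

theorem chshS_eq_of_corr_eq_ite {P : Bool → Bool → Bool → Bool → ℝ} {c : ℝ}
    (hP : ∀ x y, corr P x y = if x && y then c else 1) (x y : Bool) :
    chshS P x y = if x || y then 1 + c else 3 - c := by
  cases x <;> cases y <;> simp [chshS, hP] <;> ring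

theorem CHSH_eq_of_corr_eq_ite {P : Bool → Bool → Bool → Bool → ℝ} {c : ℝ}
    (hP : ∀ x y, corr P x y = if x && y then c else 1) (hc : c ≤ 1) : CHSH P = 3 - c := by
  simp only [CHSH, chshS_eq_of_corr_eq_ite hP, Bool.or_false, Bool.or_true, Bool.false_eq_true,
    if_true, if_false, max_self]
  have hdom : |1 + c| ≤ 3 - c := abs_le.mpr ⟨by linarith, by linarith⟩
  rw [abs_of_nonneg (by linarith : (0 : ℝ) ≤ 3 - c)]
  exact le_antisymm (max_le (max_le le_rfl hdom) hdom) (le_max_of_le_left (le_max_left _ _))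

/-- For `0 < ε < 1`, the Brunner–Skrzypczyk protocol maps the correlated
non-local box `P^C_ε` (of CHSH value `2(ε+1)`) to a box of CHSH value
`3ε − ε² + 2`, strictly increasing the CHSH value. -/
theorem brunner_skrzypczyk_distills (ε : ℝ) (h0 : 0 < ε) (h1 : ε < 1) :
    CHSH (BS (PC ε)) = 3 * ε - ε ^ 2 + 2 ∧
    CHSH (PC ε) = 2 * (ε + 1) ∧
    3 * ε - ε ^ 2 + 2 > 2 * (ε + 1) := by
  refine ⟨?_, ?_, by nlinarith⟩
  · rw [CHSH_eq_of_corr_eq_ite (corr_BS_PC ε) (by nlinarith)]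
    ring
  · rw [CHSH_eq_of_corr_eq_ite (corr_PC ε) (by linarith)]
    ring
end
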